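/- Let Λ be an artin algebra and z a class of finite length Λ-modules such that add(z) is closed under extensions and under factor modules. Then g(z), the class of all (not necessarily finite length) Λ-modules generated by z, is closed under extensions. -/
import Mathlib


universe u v

/-- `g(z)`: the class of modules generated by `z`, i.e. epimorphic images of
(possibly infinite) direct sums of modules in `z`. -/
def genBy {Λ : Type u} [Ring Λ] (z : Set (ModuleCat.{v} Λ)) : Set (ModuleCat.{v} Λ) :=
  {M | ∃ (ι : Type v) (N : ι → ModuleCat.{v} Λ), (∀ i, N i ∈ z) ∧
    ∃ f : (DirectSum ι fun i => ↥(N i)) →ₗ[Λ] M, Function.Surjective f}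

/-- `add(z)`: the closure of `z` under finite direct sums, direct summands and
isomorphism: the modules which are direct summands of finite direct sums of modules
in `z`. -/
def addCl {Λ : Type u} [Ring Λ] (z : Set (ModuleCat.{v} Λ)) : Set (ModuleCat.{v} Λ) :=
  {M | ∃ (n : ℕ) (N : Fin n → ModuleCat.{v} Λ), (∀ i, N i ∈ z) ∧
    ∃ (s : M →ₗ[Λ] ∀ i, ↥(N i)) (p : (∀ i, ↥(N i)) →ₗ[Λ] M), p.comp s = LinearMap.id}

/-- A class of modules is closed under extensions. -/
def ClosedUnderExt {Λ : Type u} [Ring Λ] (X : Set (ModuleCat.{v} Λ)) : Prop :=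
  ∀ (Y : ModuleCat.{v} Λ) (U : Submodule Λ Y),
    ModuleCat.of Λ U ∈ X → ModuleCat.of Λ (↥Y ⧸ U) ∈ X → Y ∈ X

section Aux

variable {Λ : Type u} [Ring Λ] {z : Set (ModuleCat.{v} Λ)}

/-- `addCl` is closed under linear isomorphism. -/
lemma addCl_congr {M : ModuleCat.{v} Λ} (h : M ∈ addCl z) {X : Type v} [AddCommGroup X]
    [Module Λ X] (e : ↥M ≃ₗ[Λ] X) : ModuleCat.of Λ X ∈ addCl z := by
  obtain ⟨n, N, hN, s, p, hps⟩ := h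
  refine ⟨n, N, hN, s.comp (e.symm : X →ₗ[Λ] ↥M), (e : ↥M →ₗ[Λ] X).comp p, ?_⟩
  ext x
  have := congrArg (fun (φ : ↥M →ₗ[Λ] ↥M) => e (φ (e.symm x))) hps
  simpa using this

/-- Membership in `addCl` from an arbitrary finite index type. -/
lemma mem_addCl_of_fintype {ι : Type*} [Fintype ι] (N : ι → ModuleCat.{v} Λ)
    (hN : ∀ i, N i ∈ z) (M : ModuleCat.{v} Λ) (s : ↥M →ₗ[Λ] ∀ i, ↥(N i))
    (p : (∀ i, ↥(N i)) →ₗ[Λ] ↥M) (hps : p.comp s = LinearMap.id) : M ∈ addCl z := by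
  classical
  set e := Fintype.equivFin ι
  set E := LinearEquiv.piCongrLeft' Λ (fun i => ↥(N i)) e
  refine ⟨Fintype.card ι, fun j => N (e.symm j), fun j => hN _,
    (E : _ →ₗ[Λ] _).comp s, p.comp (E.symm : _ →ₗ[Λ] _), ?_⟩
  ext x
  have := congrArg (fun (φ : ↥M →ₗ[Λ] ↥M) => φ x) hps
  simpa using this

/-- The linear version of `Equiv.sumPiEquivProdPi`. -/
def sumPiLequivProdPi (R : Type*) [Semiring R] {ι ι' : Type*} (π : ι ⊕ ι' → Type*)
    [∀ i, AddCommMonoid (π i)] [∀ i, Module R (π i)] :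
    ((∀ i, π i) ≃ₗ[R] (∀ i, π (.inl i)) × (∀ i', π (.inr i'))) :=
  { Equiv.sumPiEquivProdPi π with
    map_add' := fun _ _ => rfl
    map_smul' := fun _ _ => rfl }

/-- The zero module is in `addCl z`. -/
lemma addCl_zero : ModuleCat.of Λ PUnit.{v+1} ∈ addCl z := by
  refine ⟨0, Fin.elim0, fun i => i.elim0, 0, 0, ?_⟩
  ext x

/-- `addCl` is closed under binary products. -/
lemma addCl_prod {M M' : ModuleCat.{v} Λ} (h : M ∈ addCl z) (h' : M' ∈ addCl z) :
    ModuleCat.of Λ (↥M × ↥M') ∈ addCl z := by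
  obtain ⟨n, N, hN, s, p, hps⟩ := h
  obtain ⟨m, N', hN', s', p', hps'⟩ := h'
  let K : Fin n ⊕ Fin m → ModuleCat.{v} Λ := Sum.elim N N'
  have E : (∀ i, ↥(K i)) ≃ₗ[Λ] (∀ i : Fin n, ↥(N i)) × (∀ j : Fin m, ↥(N' j)) :=
    sumPiLequivProdPi Λ (fun i => ↥(K i))
  refine mem_addCl_of_fintype K (by rintro (i | j); exacts [hN i, hN' j]) _
    ((E.symm : _ →ₗ[Λ] _).comp ((s.prodMap s') : ↥M × ↥M' →ₗ[Λ] _))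
    (((p.prodMap p') : _ →ₗ[Λ] ↥M × ↥M').comp (E : _ →ₗ[Λ] _)) ?_
  apply LinearMap.ext
  intro x
  have h1 := congrArg (fun (φ : ↥M →ₗ[Λ] ↥M) => φ x.1) hps
  have h2 := congrArg (fun (φ : ↥M' →ₗ[Λ] ↥M') => φ x.2) hps'
  simp only [LinearMap.comp_apply, LinearMap.id_apply] at h1 h2
  show (p.prodMap p') (E (E.symm ((s.prodMap s') x))) = x
  rw [E.apply_symm_apply]
  simp [h1, h2]

/-- `addCl` is closed under images of linear maps (using closure under factor modules). -/
lemma addCl_image (hfac : ∀ M ∈ addCl z, ∀ U : Submodule Λ M,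
      ModuleCat.of Λ (↥M ⧸ U) ∈ addCl z)
    {Z : ModuleCat.{v} Λ} (hZ : Z ∈ addCl z) {X : Type v} [AddCommGroup X] [Module Λ X]
    (f : ↥Z →ₗ[Λ] X) : ModuleCat.of Λ ↥(LinearMap.range f) ∈ addCl z :=
  addCl_congr (hfac Z hZ (LinearMap.ker f)) f.quotKerEquivRange

/-- Members of `addCl z` have finite length when members of `z` do. -/
lemma addCl_finiteLength (hfl : ∀ Z ∈ z, IsFiniteLength Λ ↥Z) {M : ModuleCat.{v} Λ}
    (h : M ∈ addCl z) : IsFiniteLength Λ ↥M := by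
  obtain ⟨n, N, hN, s, p, hps⟩ := h
  have hinj : Function.Injective s := by
    intro a b hab
    have ha := congrArg (fun (φ : ↥M →ₗ[Λ] ↥M) => φ a) hps
    have hb := congrArg (fun (φ : ↥M →ₗ[Λ] ↥M) => φ b) hps
    simp only [LinearMap.comp_apply, LinearMap.id_apply] at ha hb
    rw [← ha, ← hb, hab]
  haveI : ∀ i, IsNoetherian Λ ↥(N i) := fun i =>
    ((isFiniteLength_iff_isNoetherian_isArtinian.mp (hfl _ (hN i)))).1
  haveI : ∀ i, IsArtinian Λ ↥(N i) := fun i =>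
    ((isFiniteLength_iff_isNoetherian_isArtinian.mp (hfl _ (hN i)))).2
  rw [isFiniteLength_iff_isNoetherian_isArtinian]
  exact ⟨isNoetherian_of_injective s hinj, isArtinian_of_injective s hinj⟩

/-- Pointwise characterisation of `genBy`: a module is generated by `z` iff each of
its elements is in the range of a linear map from a module in `addCl z`. -/
lemma mem_genBy_iff (M : ModuleCat.{v} Λ) :
    M ∈ genBy z ↔ ∀ m : ↥M, ∃ Z ∈ addCl z, ∃ f : ↥Z →ₗ[Λ] ↥M, m ∈ LinearMap.range f := by
  classical
  constructor
  · rintro ⟨ι, N, hN, f, hf⟩ m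
    obtain ⟨x, rfl⟩ := hf m
    set S := DFinsupp.support x with hS
    refine ⟨ModuleCat.of Λ (∀ j : S, ↥(N j)),
      mem_addCl_of_fintype (fun j : S => N j) (fun j => hN j) _ LinearMap.id LinearMap.id rfl,
      ∑ j : S, (f.comp (DirectSum.lof Λ ι (fun i => ↥(N i)) j)).comp (LinearMap.proj j),
      ⟨fun j => x j.1, ?_⟩⟩
    have hx : (∑ j : S, DirectSum.lof Λ ι (fun i => ↥(N i)) j.1 (x j.1)) = x := by
      rw [Finset.sum_coe_sort S (fun i => DirectSum.lof Λ ι (fun i => ↥(N i)) i (x i))]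
      simpa [DirectSum.lof_eq_of] using DirectSum.sum_support_of x
    calc (∑ j : S, (f.comp (DirectSum.lof Λ ι (fun i => ↥(N i)) j.1)).comp
            (LinearMap.proj j)) (fun j => x j.1)
        = ∑ j : S, f (DirectSum.lof Λ ι (fun i => ↥(N i)) j.1 (x j.1)) := by
          simp [LinearMap.sum_apply]
      _ = f (∑ j : S, DirectSum.lof Λ ι (fun i => ↥(N i)) j.1 (x j.1)) := (map_sum f _ _).symm
      _ = f x := by rw [hx]
  · intro h
    choose Z hZ f hf using h
    choose n N hN s p hps using hZ
    refine ⟨Σ m : ↥M, Fin (n m), fun j => N j.1 j.2, fun j => hN j.1 j.2,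
      DirectSum.toModule Λ _ ↥M (fun j =>
        ((f j.1).comp (p j.1)).comp (LinearMap.single Λ (fun i => ↥(N j.1 i)) j.2)), ?_⟩
    intro m
    obtain ⟨w, hw⟩ := hf m
    set v : ∀ i : Fin (n m), ↥(N m i) := s m w with hv
    have hpv : p m v = w := by
      have := congrArg (fun (φ : ↥(Z m) →ₗ[Λ] ↥(Z m)) => φ w) (hps m)
      simpa using this
    refine ⟨∑ i : Fin (n m), DirectSum.lof Λ _ (fun j : Σ m : ↥M, Fin (n m) => ↥(N j.1 j.2))
      ⟨m, i⟩ (v i), ?_⟩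
    rw [map_sum]
    have : ∀ i : Fin (n m),
        (DirectSum.toModule Λ _ ↥M (fun j =>
          ((f j.1).comp (p j.1)).comp (LinearMap.single Λ (fun i => ↥(N j.1 i)) j.2)))
          (DirectSum.lof Λ _ (fun j : Σ m : ↥M, Fin (n m) => ↥(N j.1 j.2)) ⟨m, i⟩ (v i))
        = (f m) ((p m) (Pi.single i (v i))) := by
      intro i
      rw [DirectSum.toModule_lof]
      rfl
    rw [Finset.sum_congr rfl (fun i _ => this i), ← map_sum, ← map_sum,
      Finset.univ_sum_single v, hpv, hw]

/-- Finitely many elements, each in the range of a map from `addCl z` landing in a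
submodule `P`, are simultaneously in the range of a single such map. -/
lemma cover_finset {W : Type v} [AddCommGroup W] [Module Λ W] (P : Submodule Λ W)
    (t : Finset W)
    (h : ∀ a ∈ t, ∃ Z ∈ addCl z, ∃ f : ↥Z →ₗ[Λ] W,
      a ∈ LinearMap.range f ∧ LinearMap.range f ≤ P) :
    ∃ Z ∈ addCl z, ∃ f : ↥Z →ₗ[Λ] W,
      (∀ a ∈ t, a ∈ LinearMap.range f) ∧ LinearMap.range f ≤ P := by
  classical
  induction t using Finset.induction_on with
  | empty =>
      exact ⟨ModuleCat.of Λ PUnit.{v+1}, addCl_zero, 0, by simp, by simp⟩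
  | @insert a t ha ih =>
      obtain ⟨Za, hZa, fa, hfa, hfaP⟩ := h a (Finset.mem_insert_self a t)
      obtain ⟨Zt, hZt, ft, hft, hftP⟩ := ih (fun b hb => h b (Finset.mem_insert_of_mem hb))
      refine ⟨ModuleCat.of Λ (↥Za × ↥Zt), addCl_prod hZa hZt, fa.coprod ft, ?_, ?_⟩
      · intro b hb
        rw [LinearMap.range_coprod]
        rcases Finset.mem_insert.mp hb with rfl | hb
        · exact Submodule.mem_sup_left hfa
        · exact Submodule.mem_sup_right (hft b hb)
      · rw [LinearMap.range_coprod]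
        exact sup_le hfaP hftP

end Aux

/-- Lemma 4 (first case): Let `Λ` be an artin algebra (a finite dimensional algebra
over a field) and `z` a class of finite length `Λ`-modules such that `add z` is closed
under extensions and under factor modules. Then `g(z)` is closed under extensions. -/
theorem stmt_7 {k : Type u} [Field k] {Λ : Type u} [Ring Λ] [Algebra k Λ]
    [FiniteDimensional k Λ] (z : Set (ModuleCat.{v} Λ))
    (hfl : ∀ Z ∈ z, IsFiniteLength Λ ↥Z)
    (hext : ClosedUnderExt (addCl z))
    (hfac : ∀ M ∈ addCl z, ∀ U : Submodule Λ M, ModuleCat.of Λ (↥M ⧸ U) ∈ addCl z) :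
    ClosedUnderExt (genBy z) := by
  classical
  have hNR : IsNoetherianRing Λ := isNoetherian_of_tower k inferInstance
  intro Y U hU hQ
  rw [mem_genBy_iff]
  intro y
  set q : ↥Y →ₗ[Λ] ↥Y ⧸ U := U.mkQ with hq
  -- cover the image of y in Y/U by a map from addCl z
  obtain ⟨Z₀, hZ₀, g₀, hg₀⟩ := (mem_genBy_iff (ModuleCat.of Λ (↥Y ⧸ U))).mp hQ (q y)
  let g : ↥Z₀ →ₗ[Λ] (↥Y ⧸ U) := g₀
  have hg : q y ∈ LinearMap.range g := hg₀
  -- Z₀ is finitely generated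
  have hZ₀fl : IsFiniteLength Λ ↥Z₀ := addCl_finiteLength hfl hZ₀
  haveI : IsNoetherian Λ ↥Z₀ := (isFiniteLength_iff_isNoetherian_isArtinian.mp hZ₀fl).1
  obtain ⟨t, ht⟩ := (IsNoetherian.noetherian (⊤ : Submodule Λ ↥Z₀))
  -- lift the generators of Z₀ along q
  have lift : ∀ a : ↥Z₀, ∃ yy : ↥Y, q yy = g a := fun a =>
    Submodule.Quotient.mk_surjective U (g a)
  choose w hw using lift
  set V : Submodule Λ ↥Y := Submodule.span Λ (w '' ↑t) with hV
  -- the image of V in Y/U equals the range of g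
  have hqV : Submodule.map q V = LinearMap.range g := by
    rw [hV, Submodule.map_span, Set.image_image]
    have : (fun a => q (w a)) '' ↑t = ⇑g '' ↑t := by
      apply Set.image_congr
      intro a _
      exact hw a
    rw [this, Submodule.span_image, ht, Submodule.map_top]
  -- decompose y = u + v with u ∈ U and v ∈ V
  have hyV : q y ∈ Submodule.map q V := hqV ▸ hg
  obtain ⟨v, hvV, hqv⟩ := hyV
  have huU : y - v ∈ U := by
    rw [← Submodule.ker_mkQ U, LinearMap.mem_ker, map_sub, hqv, sub_self]
  -- V is a finitely generated, hence noetherian, module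
  have hVfg : V.FG := ⟨(t.image w), by rw [Finset.coe_image, hV]⟩
  haveI hVnoeth : IsNoetherian Λ ↥V := isNoetherian_of_fg_of_noetherian V hVfg
  -- U' := V ⊓ U is finitely generated
  have hU'fg : (V ⊓ U).FG := by
    have h1 : (Submodule.comap V.subtype (V ⊓ U)).FG := IsNoetherian.noetherian _
    have h2 := h1.map V.subtype
    rwa [Submodule.map_comap_subtype, inf_of_le_right inf_le_left] at h2
  -- obtain a single addCl-map covering U' := V ⊓ U
  obtain ⟨tu, htu⟩ := hU'fg
  have hcov : ∀ a ∈ tu, ∃ Z ∈ addCl z, ∃ f : ↥Z →ₗ[Λ] ↥Y,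
      a ∈ LinearMap.range f ∧ LinearMap.range f ≤ U := by
    intro a ha
    have haU : a ∈ U := by
      have : a ∈ V ⊓ U := htu ▸ Submodule.subset_span ha
      exact this.2
    obtain ⟨Za, hZa, fa₀, hfa⟩ := (mem_genBy_iff (ModuleCat.of Λ ↥U)).mp hU ⟨a, haU⟩
    let fa : ↥Za →ₗ[Λ] ↥U := fa₀
    refine ⟨Za, hZa, U.subtype.comp fa, ?_, ?_⟩
    · obtain ⟨xa, hxa⟩ := hfa
      exact ⟨xa, by rw [LinearMap.comp_apply]; exact congrArg Subtype.val hxa⟩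
    · rintro b ⟨xb, rfl⟩
      exact (fa xb).2
  obtain ⟨Z', hZ', h', hcov', hrange'⟩ := cover_finset U tu hcov
  set T := LinearMap.range h' with hT
  have hU'T : V ⊓ U ≤ T := by
    rw [← htu]
    exact Submodule.span_le.mpr (fun a ha => hcov' a ha)
  set V' := V ⊔ T with hV'
  have hTV' : T ≤ V' := le_sup_right
  have hVT : V ⊓ T = V ⊓ U :=
    le_antisymm (inf_le_inf_left V hrange') (le_inf inf_le_left hU'T)
  -- V' lies in addCl z, by closure under extensions
  have hsub : ModuleCat.of Λ ↥(Submodule.comap V'.subtype T) ∈ addCl z := by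
    have h1 : ModuleCat.of Λ ↥T ∈ addCl z := addCl_image hfac hZ' h'
    exact addCl_congr h1 (Submodule.comapSubtypeEquivOfLe hTV').symm
  have hquot : ModuleCat.of Λ (↥V' ⧸ Submodule.comap V'.subtype T) ∈ addCl z := by
    set φ : ↥V →ₗ[Λ] (↥Y ⧸ U) := q.comp V.subtype with hφ
    have hker : LinearMap.ker φ = Submodule.comap V.subtype (V ⊓ T) := by
      rw [hφ, LinearMap.ker_comp, hq, Submodule.ker_mkQ]
      simp [hVT, Submodule.comap_inf, Submodule.comap_subtype_self]
    have hrangeφ : LinearMap.range φ = LinearMap.range g := by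
      rw [hφ, LinearMap.range_comp, Submodule.range_subtype, hqV]
    have e : (↥Z₀ ⧸ LinearMap.ker g) ≃ₗ[Λ] (↥V' ⧸ Submodule.comap V'.subtype T) :=
      (g.quotKerEquivRange).trans ((LinearEquiv.ofEq _ _ hrangeφ.symm).trans
        ((φ.quotKerEquivRange).symm.trans ((Submodule.quotEquivOfEq _ _ hker).trans
          (LinearMap.quotientInfEquivSupQuotient V T))))
    exact addCl_congr (hfac Z₀ hZ₀ (LinearMap.ker g)) e
  have hV'mem : ModuleCat.of Λ ↥V' ∈ addCl z :=
    hext (ModuleCat.of Λ ↥V') (Submodule.comap V'.subtype T) hsub hquot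
  -- finally, cover y = (y - v) + v
  obtain ⟨Zu, hZu, fu₀, hfu⟩ := (mem_genBy_iff (ModuleCat.of Λ ↥U)).mp hU ⟨y - v, huU⟩
  let fu : ↥Zu →ₗ[Λ] ↥U := fu₀
  let fu' : ↥Zu →ₗ[Λ] ↥Y := U.subtype.comp fu
  obtain ⟨xu, hxu⟩ := hfu
  refine ⟨ModuleCat.of Λ (↥Zu × ↥V'), addCl_prod hZu hV'mem,
    fu'.coprod (V'.subtype : ↥V' →ₗ[Λ] ↥Y),
    ⟨(xu, ⟨v, Submodule.mem_sup_left hvV⟩), ?_⟩⟩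
  have h1 : fu' xu = y - v := congrArg Subtype.val hxu
  show fu' xu + (V'.subtype) ⟨v, Submodule.mem_sup_left hvV⟩ = y
  rw [h1]
  exact sub_add_cancel y v
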